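/- arXiv:2004.09177 — 2 statements merged into one kernel-verified Lean document; each statement's English description precedes it below -/
import Mathlib

section
/- For a kernel W with values in [-1,1], the cut norm of W is at most the L²[0,1] → L²[0,1] operator norm of the integral operator T_W, and the operator norm of T_W is at most √8 times the square root of the cut norm of W. -/
/-!
For `C ≤ B`, test `T_W` on the normalised indicator of `T` and pair the result with the
indicator of `S` by Cauchy–Schwarz.

For the other bound, the cut norm controls `T_W` as an operator `L^∞ → L¹`: by Fubini,
`∫_H T_W h = ∫ k h` with `k = ∫_H W(x, ·) dx`, and splitting according to the sign of `k`
(then of `T_W h`) gives `‖T_W h‖₁ ≤ 4 ‖W‖_□ ‖h‖_∞`, while trivially `‖T_W h‖_∞ ≤ ‖h‖₁`.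
Along the iterates `g n = T_W^n f` these give `‖g (n+1)‖₂² ≤ (4 ‖W‖_□)^n`, whereas the
symmetry of `W` makes `n ↦ ‖g n‖₂²` log-convex, so that `‖T_W f‖₂^(2(n+1)) ≤ ‖g (n+1)‖₂²`.
Letting `n → ∞` gives `‖T_W f‖₂ ≤ 2 √‖W‖_□`.
-/

open MeasureTheory Set

theorem pow_le_of_sq_le_mul {c : ℕ → ℝ} (h0 : c 0 = 1) (hc : ∀ n, 0 ≤ c n)
    (hconv : ∀ n, c (n + 1) ^ 2 ≤ c n * c (n + 2)) (n : ℕ) : c 1 ^ n ≤ c n := by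
  rcases (hc 1).eq_or_lt with h1 | h1
  · cases n with
    | zero => simp [h0]
    | succ n => rw [← h1, zero_pow n.succ_ne_zero]; exact hc _
  have hstep : ∀ n, 0 < c n ∧ c 1 * c n ≤ c (n + 1) := by
    intro n
    induction n with
    | zero => simp [h0]
    | succ n ih =>
      have hpos : 0 < c (n + 1) := (mul_pos h1 ih.1).trans_le ih.2
      refine ⟨hpos, le_of_mul_le_mul_left ?_ ih.1⟩
      calc c n * (c 1 * c (n + 1)) = c 1 * c n * c (n + 1) := by ring
        _ ≤ c (n + 1) ^ 2 := by rw [sq]; exact mul_le_mul_of_nonneg_right ih.2 hpos.le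
        _ ≤ c n * c (n + 2) := hconv n
  induction n with
  | zero => simp [h0]
  | succ n ih => rw [pow_succ']; exact (mul_le_mul_of_nonneg_left ih h1.le).trans (hstep n).2

theorem le_of_forall_pow_succ_le_pow {a K : ℝ} (h : ∀ n : ℕ, a ^ (n + 1) ≤ K ^ n) : a ≤ K := by
  by_contra! hKa
  have h1 : a ^ 2 ≤ K := by simpa using h 1
  have hK : 0 ≤ K := (sq_nonneg a).trans h1
  have ha : 0 < a := hK.trans_lt hKa
  rcases hK.eq_or_lt with hK0 | hK0
  · rw [← hK0] at h1
    exact (pow_pos ha 2).not_ge h1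
  obtain ⟨n, hn⟩ := pow_unbounded_of_one_lt (1 / a) ((one_lt_div hK0).2 hKa)
  rw [div_pow, lt_div_iff₀ (pow_pos hK0 n), one_div, inv_mul_lt_iff₀ ha] at hn
  linarith [h n, pow_succ' a n]

section L2

variable {α : Type*} [MeasurableSpace α] {μ : Measure α}

theorem abs_integral_mul_le_sqrt_mul_sqrt {u v : α → ℝ} (hu : MemLp u 2 μ) (hv : MemLp v 2 μ) :
    |∫ x, u x * v x ∂μ| ≤ √(∫ x, u x ^ 2 ∂μ) * √(∫ x, v x ^ 2 ∂μ) := by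
  have holder := integral_mul_le_Lp_mul_Lq_of_nonneg Real.HolderConjugate.two_two
    (Filter.Eventually.of_forall fun x => abs_nonneg (u x))
    (Filter.Eventually.of_forall fun x => abs_nonneg (v x))
    (by rw [ENNReal.ofReal_ofNat]; exact hu.abs) (by rw [ENNReal.ofReal_ofNat]; exact hv.abs)
  calc |∫ x, u x * v x ∂μ| ≤ ∫ x, |u x| * |v x| ∂μ := by
        simpa only [abs_mul] using abs_integral_le_integral_abs (f := fun x => u x * v x) (μ := μ)
    _ ≤ _ := holder
    _ = _ := by simp only [Real.rpow_two, sq_abs, Real.sqrt_eq_rpow]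

variable [IsProbabilityMeasure μ]

theorem integral_abs_le_sqrt_integral_sq {u : α → ℝ} (hu : MemLp u 2 μ) :
    ∫ x, |u x| ∂μ ≤ √(∫ x, u x ^ 2 ∂μ) := by
  have h := abs_integral_mul_le_sqrt_mul_sqrt hu.abs (memLp_const (1 : ℝ))
  simp only [Pi.abs_apply, mul_one, one_pow, integral_const, probReal_univ, smul_eq_mul,
    Real.sqrt_one, sq_abs] at h
  exact (le_abs_self _).trans h

theorem abs_setIntegral_le_sqrt_integral_sq {u : α → ℝ} (hu : MemLp u 2 μ) (s : Set α) :
    |∫ x in s, u x ∂μ| ≤ √(∫ x, u x ^ 2 ∂μ) :=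
  abs_integral_le_integral_abs.trans <|
    (setIntegral_le_integral (hu.integrable one_le_two).abs
      (Filter.Eventually.of_forall fun x => abs_nonneg (u x))).trans
    (integral_abs_le_sqrt_integral_sq hu)

end L2

theorem integral_abs_le_two_mul_of_abs_setIntegral_le {α : Type*} [MeasurableSpace α]
    {μ : Measure α} {g : α → ℝ} {K : ℝ} (hg : Integrable g μ) (hgm : Measurable g)
    (hK : ∀ s, MeasurableSet s → |∫ x in s, g x ∂μ| ≤ K) :
    ∫ x, |g x| ∂μ ≤ 2 * K := by
  set s := {x | 0 ≤ g x}
  have hs : MeasurableSet s := measurableSet_le measurable_const hgm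
  have hpos : ∫ x in s, |g x| ∂μ = ∫ x in s, g x ∂μ :=
    setIntegral_congr_fun hs fun x hx => abs_of_nonneg hx
  have hneg : ∫ x in sᶜ, |g x| ∂μ = -∫ x in sᶜ, g x ∂μ := by
    rw [← integral_neg]
    exact setIntegral_congr_fun hs.compl fun x hx => abs_of_neg (not_le.1 hx)
  rw [← integral_add_compl hs hg.abs, hpos, hneg]
  linarith [(abs_le.1 (hK s hs)).2, (abs_le.1 (hK sᶜ hs.compl)).1]

noncomputable def kernelOperator {α : Type*} [MeasurableSpace α] (μ : Measure α)
    (W : α → α → ℝ) (f : α → ℝ) (x : α) : ℝ :=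
  ∫ y, W x y * f y ∂μ

section KernelOperator

variable {α : Type*} [MeasurableSpace α] {μ : Measure α} {W : α → α → ℝ}

theorem sqrt_integral_sq_kernelOperator_le {B : ℝ}
    (hB : ∀ f, Measurable f → √(∫ x, f x ^ 2 ∂μ) = 1 →
      √(∫ x, kernelOperator μ W f x ^ 2 ∂μ) ≤ B)
    {f : α → ℝ} (hfm : Measurable f) (hf : MemLp f 2 μ) :
    √(∫ x, kernelOperator μ W f x ^ 2 ∂μ) ≤ B * √(∫ x, f x ^ 2 ∂μ) := by
  have hf2 : 0 ≤ ∫ x, f x ^ 2 ∂μ := integral_nonneg fun x => sq_nonneg _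
  set s := √(∫ x, f x ^ 2 ∂μ) with hs_def
  rcases (show 0 ≤ s from Real.sqrt_nonneg _).eq_or_lt with hs | hs
  · have hf0 : f =ᵐ[μ] 0 := by
      have h0 : ∫ x, f x ^ 2 ∂μ = 0 := by rw [← Real.sq_sqrt hf2, ← hs_def, ← hs]; simp
      filter_upwards [(integral_eq_zero_iff_of_nonneg (fun x => sq_nonneg (f x))
        hf.integrable_sq).1 h0] with x hx
      simpa using hx
    have hTf : kernelOperator μ W f = 0 := funext fun x =>
      integral_eq_zero_of_ae (by filter_upwards [hf0] with y hy; simp [hy])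
    rw [hTf, ← hs]
    simp
  · have hss : s ^ 2 = ∫ x, f x ^ 2 ∂μ := Real.sq_sqrt hf2
    have hTs : kernelOperator μ W (fun x => f x / s) = fun x => kernelOperator μ W f x / s :=
      funext fun x => by simp only [kernelOperator, ← integral_div, mul_div_assoc]
    have hnorm : √(∫ x, (f x / s) ^ 2 ∂μ) = 1 := by
      simp_rw [div_pow]
      rw [integral_div, ← hss, div_self (by positivity), Real.sqrt_one]
    have h := hB _ (hfm.div_const s) hnorm
    simp_rw [hTs, div_pow] at h
    rw [integral_div, Real.sqrt_div' _ (by positivity), Real.sqrt_sq hs.le, div_le_iff₀ hs] at h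
    exact h

theorem Measurable.kernelOperator [SFinite μ] (hW : Measurable (Function.uncurry W))
    {h : α → ℝ} (hh : Measurable h) : Measurable (kernelOperator μ W h) :=
  (hW.mul (hh.comp measurable_snd)).stronglyMeasurable.integral_prod_right'.measurable

theorem measurable_iterate_kernelOperator [SFinite μ] (hW : Measurable (Function.uncurry W))
    {f : α → ℝ} (hfm : Measurable f) (n : ℕ) : Measurable ((kernelOperator μ W)^[n] f) := by
  induction n with
  | zero => exact hfm
  | succ n ih =>
    rw [Function.iterate_succ_apply']
    exact hW.kernelOperator ih

variable (hW : Measurable (Function.uncurry W)) (hW1 : ∀ x y, |W x y| ≤ 1)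
include hW1

theorem abs_kernelOperator_le {h : α → ℝ} (hh : Integrable h μ) (x : α) :
    |kernelOperator μ W h x| ≤ ∫ y, |h y| ∂μ :=
  abs_integral_le_integral_abs.trans <| integral_mono_of_nonneg
    (Filter.Eventually.of_forall fun y => abs_nonneg _) hh.abs
    (Filter.Eventually.of_forall fun y => by
      simpa [abs_mul] using mul_le_mul_of_nonneg_right (hW1 x y) (abs_nonneg (h y)))

include hW

theorem integrable_mul_kernel_mul {ν : Measure α} [SFinite μ] [SFinite ν] {u v : α → ℝ}
    (hu : Integrable u μ) (hv : Integrable v ν) :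
    Integrable (Function.uncurry fun x y => u x * W x y * v y) (μ.prod ν) := by
  refine (hu.abs.mul_prod hv.abs).mono'
    ((hu.1.comp_fst.mul hW.aestronglyMeasurable).mul hv.1.comp_snd) (Filter.Eventually.of_forall ?_)
  rintro ⟨x, y⟩
  simpa [abs_mul] using mul_le_mul_of_nonneg_right
    (mul_le_of_le_one_right (abs_nonneg (u x)) (hW1 x y)) (abs_nonneg (v y))

theorem integral_kernelOperator_mul [SFinite μ] (hsymm : ∀ x y, W x y = W y x) {u v : α → ℝ}
    (hu : Integrable u μ) (hv : Integrable v μ) :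
    ∫ x, kernelOperator μ W u x * v x ∂μ = ∫ x, u x * kernelOperator μ W v x ∂μ := by
  calc ∫ x, kernelOperator μ W u x * v x ∂μ = ∫ x, ∫ y, v x * W x y * u y ∂μ ∂μ := by
        congr 1 with x
        rw [kernelOperator, ← integral_mul_const]
        congr 1 with y
        ring
    _ = ∫ y, ∫ x, v x * W x y * u y ∂μ ∂μ :=
        integral_integral_swap (integrable_mul_kernel_mul hW hW1 hv hu)
    _ = ∫ x, u x * kernelOperator μ W v x ∂μ := by
        congr 1 with y
        rw [kernelOperator, ← integral_const_mul]
        congr 1 with x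
        rw [hsymm]
        ring

variable [IsProbabilityMeasure μ]

theorem memLp_kernelOperator {h : α → ℝ} (hhm : Measurable h) (hh : Integrable h μ)
    (p : ENNReal) : MemLp (kernelOperator μ W h) p μ :=
  .of_bound (hW.kernelOperator hhm).aestronglyMeasurable _
    (Filter.Eventually.of_forall (abs_kernelOperator_le hW1 hh))

theorem abs_setIntegral_setIntegral_le {B : ℝ}
    (hB : ∀ f, Measurable f → √(∫ x, f x ^ 2 ∂μ) = 1 →
      √(∫ x, kernelOperator μ W f x ^ 2 ∂μ) ≤ B)
    (S : Set α) {T : Set α} (hT : MeasurableSet T) :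
    |∫ x in S, ∫ y in T, W x y ∂μ ∂μ| ≤ B := by
  have hB0 : 0 ≤ B := (Real.sqrt_nonneg _).trans (hB 1 measurable_const (by simp))
  have h1T : MemLp (T.indicator (1 : α → ℝ)) 2 μ := (memLp_const 1).indicator hT
  have hT1 : kernelOperator μ W (T.indicator 1) = fun x => ∫ y in T, W x y ∂μ := by
    ext x
    rw [kernelOperator, ← integral_indicator hT]
    congr 1 with y
    by_cases hy : y ∈ T <;> simp [hy]
  have h1T2 : √(∫ x, T.indicator (1 : α → ℝ) x ^ 2 ∂μ) ≤ 1 := by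
    have hsq : (fun x => T.indicator (1 : α → ℝ) x ^ 2) = T.indicator 1 := by
      ext x
      by_cases hx : x ∈ T <;> simp [hx]
    rw [hsq, integral_indicator_one hT, Real.sqrt_le_one]
    exact measureReal_le_one
  calc |∫ x in S, ∫ y in T, W x y ∂μ ∂μ|
      = |∫ x in S, kernelOperator μ W (T.indicator 1) x ∂μ| := by rw [hT1]
    _ ≤ √(∫ x, kernelOperator μ W (T.indicator 1) x ^ 2 ∂μ) :=
        abs_setIntegral_le_sqrt_integral_sq (memLp_kernelOperator hW hW1
          (measurable_one.indicator hT) (h1T.integrable one_le_two) 2) S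
    _ ≤ B * √(∫ x, T.indicator (1 : α → ℝ) x ^ 2 ∂μ) :=
        sqrt_integral_sq_kernelOperator_le hB (measurable_one.indicator hT) h1T
    _ ≤ B := mul_le_of_le_one_right hB0 h1T2

theorem memLp_iterate_kernelOperator {f : α → ℝ} (hfm : Measurable f) (hf : MemLp f 2 μ)
    (n : ℕ) : MemLp ((kernelOperator μ W)^[n] f) 2 μ := by
  induction n with
  | zero => exact hf
  | succ n ih =>
    rw [Function.iterate_succ_apply']
    exact memLp_kernelOperator hW hW1 (measurable_iterate_kernelOperator hW hfm n)
      (ih.integrable one_le_two) 2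

theorem sq_integral_sq_kernelOperator_le (hsymm : ∀ x y, W x y = W y x) {h : α → ℝ}
    (hhm : Measurable h) (hh : MemLp h 2 μ) :
    (∫ x, kernelOperator μ W h x ^ 2 ∂μ) ^ 2 ≤
      (∫ x, h x ^ 2 ∂μ) * ∫ x, kernelOperator μ W (kernelOperator μ W h) x ^ 2 ∂μ := by
  have hTh := memLp_kernelOperator hW hW1 hhm (hh.integrable one_le_two) 2
  have hTTh := memLp_kernelOperator hW hW1 (hW.kernelOperator hhm) (hTh.integrable one_le_two) 2
  have hadj : ∫ x, kernelOperator μ W h x ^ 2 ∂μ =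
      ∫ x, h x * kernelOperator μ W (kernelOperator μ W h) x ∂μ := by
    simp_rw [sq]
    exact integral_kernelOperator_mul hW hW1 hsymm (hh.integrable one_le_two)
      (hTh.integrable one_le_two)
  calc (∫ x, kernelOperator μ W h x ^ 2 ∂μ) ^ 2
      ≤ (√(∫ x, h x ^ 2 ∂μ) * √(∫ x, kernelOperator μ W (kernelOperator μ W h) x ^ 2 ∂μ)) ^ 2 := by
        rw [hadj, ← sq_abs]
        exact pow_le_pow_left₀ (abs_nonneg _) (abs_integral_mul_le_sqrt_mul_sqrt hh hTTh) 2
    _ = _ := by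
        rw [mul_pow, Real.sq_sqrt (integral_nonneg fun x => sq_nonneg _),
          Real.sq_sqrt (integral_nonneg fun x => sq_nonneg _)]

variable {C : ℝ}
  (hcut : ∀ S T, MeasurableSet S → MeasurableSet T → |∫ x in S, ∫ y in T, W x y ∂μ ∂μ| ≤ C)
include hcut

theorem abs_setIntegral_kernelOperator_le {h : α → ℝ} (hhm : Measurable h) {M : ℝ}
    (hM : ∀ y, |h y| ≤ M) {H : Set α} (hH : MeasurableSet H) :
    |∫ x in H, kernelOperator μ W h x ∂μ| ≤ 2 * C * M := by
  set k := fun y => ∫ x in H, W x y ∂μ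
  have hk : Integrable k μ := by
    simpa using (integrable_mul_kernel_mul hW hW1 (integrable_const (1 : ℝ))
      (integrable_const (1 : ℝ)) (μ := μ.restrict H) (ν := μ)).integral_prod_right
  have hkm : Measurable k := hW.stronglyMeasurable.integral_prod_left'.measurable
  have hh : Integrable h μ := .of_bound hhm.aestronglyMeasurable M (.of_forall hM)
  have hM0 : 0 ≤ M := (abs_nonneg _).trans (hM (nonempty_of_isProbabilityMeasure μ).some)
  have hk_cut : ∫ y, |k y| ∂μ ≤ 2 * C := by
    refine integral_abs_le_two_mul_of_abs_setIntegral_le hk hkm fun T hT => ?_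
    have hswap := integral_integral_swap (integrable_mul_kernel_mul hW hW1
      (integrable_const (1 : ℝ)) (integrable_const (1 : ℝ)) (μ := μ.restrict H) (ν := μ.restrict T))
    simp only [one_mul, mul_one] at hswap
    exact hswap ▸ hcut H T hH hT
  have hswap : ∫ x in H, kernelOperator μ W h x ∂μ = ∫ y, k y * h y ∂μ := by
    simpa [kernelOperator, integral_mul_const] using integral_integral_swap
      (integrable_mul_kernel_mul hW hW1 (integrable_const (1 : ℝ)) hh (μ := μ.restrict H))
  calc |∫ x in H, kernelOperator μ W h x ∂μ| ≤ ∫ y, |k y| * M ∂μ := by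
        rw [hswap]
        refine abs_integral_le_integral_abs.trans (integral_mono_of_nonneg
          (.of_forall fun y => abs_nonneg _) (hk.abs.mul_const M) (.of_forall fun y => ?_))
        simpa [abs_mul] using mul_le_mul_of_nonneg_left (hM y) (abs_nonneg (k y))
    _ ≤ 2 * C * M := by
        rw [integral_mul_const]
        exact mul_le_mul_of_nonneg_right hk_cut hM0

theorem integral_abs_kernelOperator_kernelOperator_le {h : α → ℝ} (hhm : Measurable h)
    (hh : Integrable h μ) :
    ∫ x, |kernelOperator μ W (kernelOperator μ W h) x| ∂μ ≤ 4 * C * ∫ x, |h x| ∂μ := by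
  have hTh : Measurable (kernelOperator μ W h) := hW.kernelOperator hhm
  have := integral_abs_le_two_mul_of_abs_setIntegral_le
    ((memLp_kernelOperator (μ := μ) hW hW1 hTh
      ((memLp_kernelOperator hW hW1 hhm hh 1).integrable le_rfl) 1).integrable le_rfl)
    (hW.kernelOperator hTh)
    fun H hH => abs_setIntegral_kernelOperator_le hW hW1 hcut hTh (abs_kernelOperator_le hW1 hh) hH
  linarith

theorem integral_sq_iterate_kernelOperator_le {f : α → ℝ} (hfm : Measurable f)
    (hf : MemLp f 2 μ) (hf1 : ∫ x, f x ^ 2 ∂μ = 1) (n : ℕ) :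
    ∫ x, (kernelOperator μ W)^[n + 1] f x ^ 2 ∂μ ≤ (4 * C) ^ n := by
  set g := fun n => (kernelOperator μ W)^[n] f
  set a := fun n => ∫ x, |g n x| ∂μ
  have hg_succ (n : ℕ) : g (n + 1) = kernelOperator μ W (g n) :=
    Function.iterate_succ_apply' _ _ _
  have hgm := measurable_iterate_kernelOperator (μ := μ) hW hfm
  have hgi (n : ℕ) : Integrable (g n) μ :=
    (memLp_iterate_kernelOperator hW hW1 hfm hf n).integrable one_le_two
  have ha0 (n : ℕ) : 0 ≤ a n := integral_nonneg fun x => abs_nonneg _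
  have hsup (n : ℕ) (x : α) : |g (n + 1) x| ≤ a n := by
    rw [hg_succ]; exact abs_kernelOperator_le hW1 (hgi n) x
  have hC : 0 ≤ C := by simpa using hcut ∅ ∅ .empty .empty
  have ha1 : a 1 ≤ a 0 := by
    simpa using integral_mono (hgi 1).abs (integrable_const (a 0)) (hsup 0)
  have ha2 (n : ℕ) : a (n + 2) ≤ 4 * C * a n := by
    simp only [a, hg_succ]
    exact integral_abs_kernelOperator_kernelOperator_le hW hW1 hcut (hgm n) (hgi n)
  have hprod (n : ℕ) : a n * a (n + 1) ≤ (4 * C) ^ n * (a 0 * a 1) := by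
    induction n with
    | zero => simp
    | succ n ih =>
      calc a (n + 1) * a (n + 2) ≤ a (n + 1) * (4 * C * a n) :=
            mul_le_mul_of_nonneg_left (ha2 n) (ha0 _)
        _ = 4 * C * (a n * a (n + 1)) := by ring
        _ ≤ 4 * C * ((4 * C) ^ n * (a 0 * a 1)) := by gcongr
        _ = (4 * C) ^ (n + 1) * (a 0 * a 1) := by ring
  have ha01 : a 0 * a 1 ≤ 1 := by
    have : a 0 ≤ 1 := by
      show ∫ x, |f x| ∂μ ≤ 1
      simpa [hf1] using integral_abs_le_sqrt_integral_sq hf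
    nlinarith [ha0 0, ha0 1]
  calc ∫ x, g (n + 1) x ^ 2 ∂μ ≤ ∫ x, a n * |g (n + 1) x| ∂μ := by
        refine integral_mono_of_nonneg (.of_forall fun x => sq_nonneg _)
          ((hgi (n + 1)).abs.const_mul _) (.of_forall fun x => ?_)
        show g (n + 1) x ^ 2 ≤ a n * |g (n + 1) x|
        rw [← sq_abs, sq]
        exact mul_le_mul_of_nonneg_right (hsup n x) (abs_nonneg _)
    _ = a n * a (n + 1) := integral_const_mul _ _
    _ ≤ (4 * C) ^ n * (a 0 * a 1) := hprod n
    _ ≤ (4 * C) ^ n := mul_le_of_le_one_right (by positivity) ha01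

theorem integral_sq_kernelOperator_le (hsymm : ∀ x y, W x y = W y x) {f : α → ℝ}
    (hfm : Measurable f) (hf : MemLp f 2 μ) (hf1 : ∫ x, f x ^ 2 ∂μ = 1) :
    ∫ x, kernelOperator μ W f x ^ 2 ∂μ ≤ 4 * C := by
  set c : ℕ → ℝ := fun n => ∫ x, (kernelOperator μ W)^[n] f x ^ 2 ∂μ
  have hconv (n : ℕ) : c (n + 1) ^ 2 ≤ c n * c (n + 2) := by
    have h := sq_integral_sq_kernelOperator_le hW hW1 hsymm
      (measurable_iterate_kernelOperator hW hfm n) (memLp_iterate_kernelOperator hW hW1 hfm hf n)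
    rwa [← Function.iterate_succ_apply' (kernelOperator μ W),
      ← Function.iterate_succ_apply' (kernelOperator μ W)] at h
  have hc (n : ℕ) : c 1 ^ (n + 1) ≤ (4 * C) ^ n :=
    (pow_le_of_sq_le_mul (c := c) hf1 (fun n => integral_nonneg fun x => sq_nonneg _) hconv
      (n + 1)).trans (integral_sq_iterate_kernelOperator_le hW hW1 hcut hfm hf hf1 n)
  exact le_of_forall_pow_succ_le_pow hc

end KernelOperator

/-- Only the values of `W` on `s × s` enter integrals against `μ.restrict s`, so a kernel
bounded by `1` there may be replaced by one bounded by `1` everywhere. -/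
def clampKernel {α : Type*} (W : α → α → ℝ) (x y : α) : ℝ :=
  max (-1) (min 1 (W x y))

section ClampKernel

variable {α : Type*} {W : α → α → ℝ}

theorem Measurable.clampKernel [MeasurableSpace α] (hW : Measurable (Function.uncurry W)) :
    Measurable (Function.uncurry (clampKernel W)) :=
  measurable_const.max (measurable_const.min hW)

theorem abs_clampKernel_le (x y : α) : |clampKernel W x y| ≤ 1 :=
  abs_le.2 ⟨le_max_left _ _, max_le (by norm_num) (min_le_left _ _)⟩

theorem clampKernel_comm (hsymm : ∀ x y, W x y = W y x) (x y : α) :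
    clampKernel W x y = clampKernel W y x := by
  rw [clampKernel, clampKernel, hsymm]

variable {s : Set α} (hW : ∀ x ∈ s, ∀ y ∈ s, W x y ∈ Icc (-1 : ℝ) 1)
include hW

theorem clampKernel_eq {x y : α} (hx : x ∈ s) (hy : y ∈ s) : clampKernel W x y = W x y := by
  rw [clampKernel, min_eq_right (hW x hx y hy).2, max_eq_right (hW x hx y hy).1]

variable [MeasurableSpace α] {μ : Measure α}

theorem kernelOperator_restrict_clampKernel (hs : MeasurableSet s) (f : α → ℝ) {x : α}
    (hx : x ∈ s) : kernelOperator (μ.restrict s) (clampKernel W) f x = ∫ y in s, W x y * f y ∂μ :=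
  setIntegral_congr_fun hs fun y hy => by rw [clampKernel_eq hW hx hy]

theorem setIntegral_setIntegral_restrict_clampKernel (hs : MeasurableSet s) {S T : Set α}
    (hS : MeasurableSet S) (hT : MeasurableSet T) :
    ∫ x in S, ∫ y in T, clampKernel W x y ∂μ.restrict s ∂μ.restrict s =
      ∫ x in S ∩ s, ∫ y in T ∩ s, W x y ∂μ ∂μ := by
  rw [Measure.restrict_restrict hS, Measure.restrict_restrict hT]
  exact setIntegral_congr_fun (hS.inter hs) fun x hx =>
    setIntegral_congr_fun (hT.inter hs) fun y hy => clampKernel_eq hW hx.2 hy.2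

end ClampKernel

/-- For a kernel W with values in [-1,1], the cut norm is at most the
L²→L² operator norm of T_W, and the operator norm is at most √8 · √(cut norm). -/
theorem stmt1 (W : ℝ → ℝ → ℝ)
    (hMeas : Measurable (Function.uncurry W))
    (hSymm : ∀ x y, W x y = W y x)
    (hBdd : ∀ x ∈ Icc (0:ℝ) 1, ∀ y ∈ Icc (0:ℝ) 1, W x y ∈ Icc (-1:ℝ) 1)
    (C : ℝ)
    (hC : IsLUB {r : ℝ | ∃ S T : Set ℝ, MeasurableSet S ∧ MeasurableSet T ∧
        S ⊆ Icc 0 1 ∧ T ⊆ Icc 0 1 ∧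
        r = |∫ x in S, ∫ y in T, W x y|} C)
    (B : ℝ)
    (hB : IsLUB {r : ℝ | ∃ f : ℝ → ℝ, Measurable f ∧
        Real.sqrt (∫ x in Icc (0:ℝ) 1, f x ^ 2) = 1 ∧
        r = Real.sqrt (∫ x in Icc (0:ℝ) 1,
              (∫ y in Icc (0:ℝ) 1, W x y * f y) ^ 2)} B) :
    C ≤ B ∧ B ≤ Real.sqrt 8 * Real.sqrt C := by
  have hI : MeasurableSet (Icc (0:ℝ) 1) := measurableSet_Icc
  have : IsProbabilityMeasure (volume.restrict (Icc (0:ℝ) 1)) := ⟨by simp⟩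
  have hV := hMeas.clampKernel
  have hop (f : ℝ → ℝ) : ∫ x in Icc (0:ℝ) 1, (∫ y in Icc (0:ℝ) 1, W x y * f y) ^ 2 =
      ∫ x in Icc (0:ℝ) 1, kernelOperator (volume.restrict (Icc 0 1)) (clampKernel W) f x ^ 2 :=
    setIntegral_congr_fun hI fun x hx => by rw [kernelOperator_restrict_clampKernel hBdd hI f hx]
  refine ⟨hC.2 ?_, hB.2 ?_⟩
  · rintro r ⟨S, T, hS, hT, hSI, hTI, rfl⟩
    rw [← inter_eq_left.2 hSI, ← inter_eq_left.2 hTI,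
      ← setIntegral_setIntegral_restrict_clampKernel hBdd hI hS hT]
    exact abs_setIntegral_setIntegral_le hV abs_clampKernel_le
      (fun f hfm hf => hB.1 ⟨f, hfm, hf, by rw [hop]⟩) S hT
  · rintro r ⟨f, hfm, hf, rfl⟩
    have hf1 : ∫ x in Icc (0:ℝ) 1, f x ^ 2 = 1 := Real.sqrt_eq_one.1 hf
    have hf2 : MemLp f 2 (volume.restrict (Icc 0 1)) :=
      (memLp_two_iff_integrable_sq hfm.aestronglyMeasurable).2
        (.of_integral_ne_zero (by rw [hf1]; exact one_ne_zero))
    have hcut (S T : Set ℝ) (hS : MeasurableSet S) (hT : MeasurableSet T) :=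
      setIntegral_setIntegral_restrict_clampKernel hBdd hI hS hT ▸
        hC.1 ⟨S ∩ _, T ∩ _, hS.inter hI, hT.inter hI, inter_subset_right, inter_subset_right, rfl⟩
    calc √(∫ x in Icc (0:ℝ) 1, (∫ y in Icc (0:ℝ) 1, W x y * f y) ^ 2) ≤ √(4 * C) := by
          rw [hop]
          exact Real.sqrt_le_sqrt (integral_sq_kernelOperator_le hV abs_clampKernel_le hcut
            (clampKernel_comm hSymm) hfm hf2 hf1)
      _ = √4 * √C := Real.sqrt_mul (by norm_num) C
      _ ≤ √8 * √C := by gcongr; norm_num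
end

section
/- Let G be a simple graph on N vertices with Laplacian eigenvalues λ₁ ≤ … ≤ λ_N and degrees reordered non-decreasingly d_{(1)} ≤ … ≤ d_{(N)}. Define the step functions μ_N(x) = Σᵢ (λᵢ/N) 1_{B_i^N}(x) and d̃_N(x) = Σᵢ (d_{(i)}/N) 1_{B_i^N}(x) on [0,1], where B_i^N are the N equal subintervals of [0,1]. Then ‖μ_N − d̃_N‖₂ ≤ ‖A‖_F / N^{3/2}, where A is the adjacency matrix and ‖A‖_F its Frobenius norm. -/
/-!
For a real symmetric `A = U diag(λ) Uᵀ` with `U` orthogonal, `diag A = S λ` for the doubly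
stochastic matrix `S = (U_{ij}²)`. After sorting both vectors (which keeps `S` doubly
stochastic), Birkhoff's theorem and the rearrangement inequality give `⟨d, S λ⟩ ≤ ⟨d, λ⟩`. Hence
`Σ (λᵢ - d₍ᵢ₎)² ≤ Σ λᵢ² - Σ d₍ᵢ₎² = ‖A‖_F² - Σ A_ii²`, which for the Laplacian is the squared
Frobenius norm of the adjacency matrix. The squared L² norm of the step function is this sum
divided by `N³`.
-/

open MeasureTheory Set Matrix

noncomputable def stepIdx (N : ℕ) (hN : 0 < N) (x : ℝ) : Fin N :=
  ⟨min ⌊x * N⌋₊ (N - 1), lt_of_le_of_lt (min_le_right _ _) (Nat.sub_lt hN one_pos)⟩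

section stepIdx
variable {N : ℕ} (hN : 0 < N)
include hN

theorem stepIdx_eq_of_mem_Ico {i : Fin N} {x : ℝ} (hx : x ∈ Ico ((i : ℝ) / N) ((i + 1) / N)) :
    stepIdx N hN x = i := by
  have hN' : (0 : ℝ) < N := by exact_mod_cast hN
  rw [Set.mem_Ico, div_le_iff₀ hN', lt_div_iff₀ hN'] at hx
  have hfloor : ⌊x * N⌋₊ = i := (Nat.floor_eq_iff ((Nat.cast_nonneg _).trans hx.1)).2 hx
  ext
  simp [stepIdx, hfloor, Nat.le_sub_one_of_lt i.2]

theorem stepIdx_mem_Ico {x : ℝ} (hx : x ∈ Ico (0 : ℝ) 1) :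
    x ∈ Ico (((stepIdx N hN x : ℕ) : ℝ) / N) (((stepIdx N hN x : ℕ) + 1) / N) := by
  have hN' : (0 : ℝ) < N := by exact_mod_cast hN
  have hxN : 0 ≤ x * N := mul_nonneg hx.1 hN'.le
  have hlt : ⌊x * N⌋₊ < N := (Nat.floor_lt hxN).2 (by nlinarith [hx.2])
  have hidx : ((stepIdx N hN x : ℕ) : ℝ) = ⌊x * N⌋₊ := by
    simp [stepIdx, Nat.le_sub_one_of_lt hlt]
  rw [hidx, Set.mem_Ico, div_le_iff₀ hN', lt_div_iff₀ hN']
  exact ⟨Nat.floor_le hxN, Nat.lt_floor_add_one _⟩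

theorem Ico_zero_one_eq_iUnion_Ico :
    Ico (0 : ℝ) 1 = ⋃ i : Fin N, Ico ((i : ℝ) / N) ((i + 1) / N) := by
  have hN' : (0 : ℝ) < N := by exact_mod_cast hN
  refine Subset.antisymm (fun x hx => mem_iUnion.2 ⟨_, stepIdx_mem_Ico hN hx⟩) ?_
  refine iUnion_subset fun i => Ico_subset_Ico (by positivity) ?_
  rw [div_le_one hN']
  exact_mod_cast i.2

theorem integrableOn_comp_stepIdx (g : Fin N → ℝ) (i : Fin N) :
    IntegrableOn (fun x => g (stepIdx N hN x)) (Ico ((i : ℝ) / N) ((i + 1) / N)) :=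
  (integrableOn_const (C := g i) measure_Ico_lt_top.ne).congr_fun
    (fun _ hx => by rw [stepIdx_eq_of_mem_Ico hN hx]) measurableSet_Ico

theorem integral_Icc_comp_stepIdx (g : Fin N → ℝ) :
    ∫ x in Icc (0 : ℝ) 1, g (stepIdx N hN x) = (∑ i, g i) / N := by
  have hpiece (i : Fin N) :
      ∫ x in Ico ((i : ℝ) / N) ((i + 1) / N), g (stepIdx N hN x) = g i / N := by
    have hlen : ((i : ℝ) + 1) / N - i / N = 1 / N := by ring
    rw [setIntegral_congr_fun measurableSet_Ico fun x hx => by rw [stepIdx_eq_of_mem_Ico hN hx],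
      setIntegral_const, measureReal_def, Real.volume_Ico, hlen,
      ENNReal.toReal_ofReal (by positivity), smul_eq_mul, one_div_mul_eq_div]
  have hdisj :
      Pairwise (Function.onFun Disjoint fun i : Fin N => Ico ((i : ℝ) / N) ((i + 1) / N)) :=
    fun i j hij => disjoint_left.2 fun x hi hj =>
      hij ((stepIdx_eq_of_mem_Ico hN hi).symm.trans (stepIdx_eq_of_mem_Ico hN hj))
  rw [integral_Icc_eq_integral_Ico, Ico_zero_one_eq_iUnion_Ico hN,
    integral_iUnion_fintype (fun _ => measurableSet_Ico) hdisj (integrableOn_comp_stepIdx hN g),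
    Finset.sum_div]
  exact Finset.sum_congr rfl fun i _ => hpiece i

end stepIdx

open Finset

namespace Matrix
variable {n : Type*} [Fintype n] [DecidableEq n]

theorem dotProduct_mulVec_le_of_mem_doublyStochastic {S : Matrix n n ℝ}
    (hS : S ∈ doublyStochastic ℝ n) {a b : n → ℝ} (hab : Monovary a b) :
    a ⬝ᵥ (S *ᵥ b) ≤ a ⬝ᵥ b := by
  have hlin : IsLinearMap ℝ fun M : Matrix n n ℝ => a ⬝ᵥ (M *ᵥ b) :=
    ⟨fun M M' => by simp [add_mulVec, dotProduct_add],
      fun c M => by simp [smul_mulVec, dotProduct_smul]⟩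
  rw [← SetLike.mem_coe, doublyStochastic_eq_convexHull_permMatrix] at hS
  refine convexHull_min ?_ (convex_halfSpace_le hlin _) hS
  rintro _ ⟨σ, rfl⟩
  simpa [permMatrix_mulVec, dotProduct] using hab.sum_mul_comp_perm_le_sum_mul (σ := σ)

theorem sum_sq_sub_le_of_eq_mulVec {S : Matrix n n ℝ} (hS : S ∈ doublyStochastic ℝ n)
    {a b : n → ℝ} (hab : Monovary a b) (ha : a = S *ᵥ b) :
    ∑ i, (b i - a i) ^ 2 ≤ ∑ i, b i ^ 2 - ∑ i, a i ^ 2 := by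
  have hdot : a ⬝ᵥ a ≤ a ⬝ᵥ b := by
    nth_rw 2 [ha]; exact dotProduct_mulVec_le_of_mem_doublyStochastic hS hab
  simp only [dotProduct] at hdot
  have hexpand : ∑ i, (b i - a i) ^ 2 = ∑ i, b i ^ 2 - 2 * ∑ i, a i * b i + ∑ i, a i * a i := by
    simp only [mul_sum, ← sum_sub_distrib, ← sum_add_distrib]
    exact sum_congr rfl fun i _ => by ring
  simp only [sq] at hexpand ⊢
  linarith

theorem of_sq_mem_doublyStochastic {U : Matrix n n ℝ} (hU : U ∈ unitaryGroup n ℝ) :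
    of (fun i j => U i j ^ 2) ∈ doublyStochastic ℝ n := by
  rw [mem_doublyStochastic_iff_sum]
  refine ⟨fun i j => sq_nonneg _, fun i => ?_, fun j => ?_⟩
  · simpa [mul_apply, one_apply, sq] using congrFun₂ (mem_unitaryGroup_iff.mp hU) i i
  · simpa [mul_apply, one_apply, sq] using congrFun₂ (mem_unitaryGroup_iff'.mp hU) j j

namespace IsHermitian
variable {A : Matrix n n ℝ} (hA : A.IsHermitian)

theorem eq_mul_diagonal_mul_star :
    A = (hA.eigenvectorUnitary : Matrix n n ℝ) * diagonal hA.eigenvalues *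
      star (hA.eigenvectorUnitary : Matrix n n ℝ) := by
  simpa using hA.spectral_theorem

theorem diag_eq_mulVec_eigenvalues :
    A.diag = of (fun i j => (hA.eigenvectorUnitary : Matrix n n ℝ) i j ^ 2) *ᵥ hA.eigenvalues := by
  ext i
  conv_lhs => rw [hA.eq_mul_diagonal_mul_star]
  simp [mul_apply, mulVec, dotProduct, diagonal, sq, mul_comm, mul_left_comm]

theorem sum_sum_sq_eq_sum_sq_eigenvalues :
    ∑ i, ∑ j, A i j ^ 2 = ∑ i, hA.eigenvalues i ^ 2 := by
  set U : Matrix n n ℝ := (hA.eigenvectorUnitary : Matrix n n ℝ)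
  set D := diagonal hA.eigenvalues
  have hUU : star U * U = 1 := hA.eigenvectorUnitary.2.1
  have htr : (A * A).trace = ∑ i, hA.eigenvalues i ^ 2 := by
    calc (A * A).trace = (U * (D * (star U * U) * D) * star U).trace := by
          conv_lhs => rw [hA.eq_mul_diagonal_mul_star]
          simp only [Matrix.mul_assoc]
          rfl
      _ = (diagonal fun i => hA.eigenvalues i ^ 2).trace := by
          rw [hUU, Matrix.mul_one, diagonal_mul_diagonal, trace_mul_cycle, hUU, Matrix.one_mul]
          simp [sq]
      _ = _ := trace_diagonal _
  rw [← htr]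
  simp only [trace, diag_apply, mul_apply, sq]
  refine sum_congr rfl fun i _ => sum_congr rfl fun j _ => ?_
  rw [← hA.apply j i, star_trivial]

theorem sum_sq_sub_diag_le {lam d : n → ℝ} {σ τ : Equiv.Perm n}
    (hlam : lam = hA.eigenvalues ∘ σ) (hd : d = A.diag ∘ τ) (hdlam : Monovary d lam) :
    ∑ i, (lam i - d i) ^ 2 ≤ ∑ i, ∑ j, A i j ^ 2 - ∑ i, A i i ^ 2 := by
  set S := of fun i j => (hA.eigenvectorUnitary : Matrix n n ℝ) i j ^ 2
  have hS : S.submatrix τ σ ∈ doublyStochastic ℝ n :=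
    reindex_mem_doublyStochastic (e₁ := τ.symm) (e₂ := σ.symm)
      (of_sq_mem_doublyStochastic hA.eigenvectorUnitary.2)
  have hdS : d = S.submatrix τ σ *ᵥ lam := by
    rw [hd, hlam, submatrix_mulVec_equiv, Function.comp_assoc, Equiv.self_comp_symm,
      Function.comp_id, hA.diag_eq_mulVec_eigenvalues]
  have hsum_lam : ∑ i, lam i ^ 2 = ∑ i, hA.eigenvalues i ^ 2 := by
    rw [hlam]; exact Equiv.sum_comp σ (fun i => hA.eigenvalues i ^ 2)
  have hsum_d : ∑ i, d i ^ 2 = ∑ i, A i i ^ 2 := by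
    rw [hd]; exact Equiv.sum_comp τ (fun i => A i i ^ 2)
  calc ∑ i, (lam i - d i) ^ 2 ≤ ∑ i, lam i ^ 2 - ∑ i, d i ^ 2 :=
        sum_sq_sub_le_of_eq_mulVec hS hdlam hdS
    _ = _ := by rw [hsum_lam, hsum_d, hA.sum_sum_sq_eq_sum_sq_eigenvalues]

end IsHermitian
end Matrix

namespace SimpleGraph
variable {V : Type*} [Fintype V] [DecidableEq V] (G : SimpleGraph V) [DecidableRel G.Adj]

theorem lapMatrix_apply_self {R : Type*} [AddGroupWithOne R] (i : V) :
    G.lapMatrix R i i = G.degree i := by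
  simp [lapMatrix, degMatrix]

theorem sum_sum_sq_lapMatrix {R : Type*} [CommRing R] :
    ∑ i, ∑ j, G.lapMatrix R i j ^ 2
      = ∑ i, (G.degree i : R) ^ 2 + ∑ i, ∑ j, G.adjMatrix R i j ^ 2 := by
  have hentry (i j : V) : G.lapMatrix R i j ^ 2
      = (if i = j then (G.degree i : R) ^ 2 else 0) + G.adjMatrix R i j ^ 2 := by
    by_cases h : i = j
    · subst h; simp [lapMatrix_apply_self]
    · simp [lapMatrix, degMatrix, h]
  simp_rw [hentry, sum_add_distrib, sum_ite_eq]
  simp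

theorem sum_sq_sub_degree_le (hL : (G.lapMatrix ℝ).IsHermitian) {lam d : V → ℝ}
    {σ τ : Equiv.Perm V} (hlam : lam = hL.eigenvalues ∘ σ)
    (hd : d = (fun i => (G.degree i : ℝ)) ∘ τ) (hdlam : Monovary d lam) :
    ∑ i, (lam i - d i) ^ 2 ≤ ∑ i, ∑ j, G.adjMatrix ℝ i j ^ 2 := by
  have hdiag : d = (G.lapMatrix ℝ).diag ∘ τ := by
    ext i
    simp [hd, lapMatrix_apply_self]
  simpa only [lapMatrix_apply_self, sum_sum_sq_lapMatrix, add_sub_cancel_left] using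
    hL.sum_sq_sub_diag_le hlam hdiag hdlam

end SimpleGraph

/-- For a simple graph on N vertices with sorted Laplacian
eigenvalues λᵢ and sorted degrees d₍ᵢ₎, the step functions
μ_N(x) = λᵢ/N and d̃_N(x) = d₍ᵢ₎/N on the N equal subintervals of [0,1] satisfy
‖μ_N − d̃_N‖₂ ≤ ‖A‖_F / N^{3/2}. -/
theorem stmt14 {N : ℕ} (hN : 0 < N) (G : SimpleGraph (Fin N)) [DecidableRel G.Adj]
    (hHerm : (G.lapMatrix ℝ).IsHermitian)
    (lam : Fin N → ℝ) (hlmono : Monotone lam)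
    (hlperm : ∃ σ : Equiv.Perm (Fin N), lam = hHerm.eigenvalues ∘ σ)
    (d : Fin N → ℝ) (hdmono : Monotone d)
    (hdperm : ∃ σ : Equiv.Perm (Fin N), d = (fun i => (G.degree i : ℝ)) ∘ σ) :
    Real.sqrt (∫ x in Icc (0:ℝ) 1,
        (lam (stepIdx N hN x) / N - d (stepIdx N hN x) / N) ^ 2)
      ≤ Real.sqrt (∑ i, ∑ j, (G.adjMatrix ℝ i j) ^ 2) / (N : ℝ) ^ ((3 : ℝ) / 2) := by
  obtain ⟨σ, hσ⟩ := hlperm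
  obtain ⟨τ, hτ⟩ := hdperm
  have hkey := G.sum_sq_sub_degree_le hHerm hσ hτ (hdmono.monovary hlmono)
  have hint : ∫ x in Icc (0:ℝ) 1, (lam (stepIdx N hN x) / N - d (stepIdx N hN x) / N) ^ 2
      = (∑ i, (lam i - d i) ^ 2) / (N : ℝ) ^ 3 := by
    rw [integral_Icc_comp_stepIdx hN fun i => (lam i / N - d i / N) ^ 2, Finset.sum_div,
      Finset.sum_div]
    refine Finset.sum_congr rfl fun i _ => ?_
    rw [div_sub_div_same, div_pow, div_div, ← pow_succ]
  have hpow : (N : ℝ) ^ ((3 : ℝ) / 2) = Real.sqrt ((N : ℝ) ^ 3) := by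
    rw [Real.sqrt_eq_rpow, ← Real.rpow_natCast, ← Real.rpow_mul (Nat.cast_nonneg N)]
    norm_num
  rw [hint, hpow, ← Real.sqrt_div (by positivity)]
  exact Real.sqrt_le_sqrt (div_le_div_of_nonneg_right hkey (by positivity))
end
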